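/- arXiv:1811.07846 — 10 statements merged into one kernel-verified Lean document; each statement's English description precedes it below -/
import Mathlib

section
/- Let L be a modular ortholattice. Define #(x,y,z) := x ⊔ (y ⊓ zᶜ) and #″(a,b,c) := #(c ⊓ (a ⊓ c)ᶜ, b, a ⊔ c) = (c ⊓ (a ⊓ c)ᶜ) ⊔ (b ⊓ (a ⊔ c)ᶜ). Then for all a, b, c ∈ L with a ≤ b and c ≤ b one has #″(a,b,c) ⊓ a = ⊥ and #″(a,b,c) ⊔ a = b. Moreover, if in addition b = a ⊔ c and a ⊓ c = ⊥, then #″(a,b,c) = c. -/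
theorem stmt_0 {L : Type*} [Lattice L] [BoundedOrder L] [IsModularLattice L]
    (compl : L → L)
    (h_le : ∀ a b : L, a ≤ b ↔ compl b ≤ compl a)
    (h_inv : ∀ a : L, compl (compl a) = a)
    (h_inf : ∀ a : L, a ⊓ compl a = ⊥)
    (h_sup : ∀ a : L, a ⊔ compl a = ⊤)
    (a b c : L) (hab : a ≤ b) (hcb : c ≤ b) :
    ((c ⊓ compl (a ⊓ c)) ⊔ (b ⊓ compl (a ⊔ c))) ⊓ a = ⊥ ∧
    ((c ⊓ compl (a ⊓ c)) ⊔ (b ⊓ compl (a ⊔ c))) ⊔ a = b ∧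
    (b = a ⊔ c → a ⊓ c = ⊥ → (c ⊓ compl (a ⊓ c)) ⊔ (b ⊓ compl (a ⊔ c)) = c) := by
  set x := c ⊓ compl (a ⊓ c) with hx
  set y := b ⊓ compl (a ⊔ c) with hy
  have hxac : x ≤ a ⊔ c := le_trans inf_le_left le_sup_right
  have hyz : y ⊓ (a ⊔ c) = ⊥ := by
    rw [hy, inf_assoc, inf_comm (compl (a ⊔ c)), h_inf]
    exact inf_bot_eq b
  -- (x ⊔ y) ⊓ (a ⊔ c) = x
  have key : (x ⊔ y) ⊓ (a ⊔ c) = x := by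
    rw [sup_inf_assoc_of_le y hxac, hyz, sup_bot_eq]
  have hxa : x ⊓ a = ⊥ := by
    rw [hx, inf_right_comm, inf_comm c a, h_inf]
  have goal1 : (x ⊔ y) ⊓ a = ⊥ := by
    have : (x ⊔ y) ⊓ a = (x ⊔ y) ⊓ ((a ⊔ c) ⊓ a) := by
      rw [inf_comm (a ⊔ c) a, inf_eq_left.2 (le_sup_left : a ≤ a ⊔ c)]
    rw [this, ← inf_assoc, key, hxa]
  have hxsup : x ⊔ (a ⊓ c) = c := by
    rw [hx, inf_sup_assoc_of_le _ inf_le_right, sup_comm, h_sup, inf_top_eq]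
  have hxa2 : x ⊔ a = a ⊔ c := by
    have : x ⊔ a = x ⊔ (a ⊓ c) ⊔ a := by
      rw [sup_assoc, sup_comm (a ⊓ c) a, sup_eq_left.2 (inf_le_left : a ⊓ c ≤ a)]
    rw [this, hxsup, sup_comm]
  have goal2 : (x ⊔ y) ⊔ a = b := by
    rw [sup_right_comm, hxa2, sup_comm, hy, inf_sup_assoc_of_le _ (sup_le hab hcb),
      sup_comm, h_sup, inf_top_eq]
  refine ⟨goal1, goal2, fun hb hac => ?_⟩
  have hbotc : compl (⊥ : L) = ⊤ := by
    have := h_sup (⊥ : L); rwa [bot_sup_eq] at this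
  rw [hx, hy, hac, hbotc, inf_top_eq, ← hb, h_inf, sup_bot_eq]
end

section
/- Let L be a bounded modular lattice, d ≥ 2, and let ā = (a_⊥, a_⊤, a₁,…,a_d, a₁₂,…,a₁d) be a d-frame in L. Given b₁ with a_⊥ ≤ b₁ ≤ a₁, define b_j := (b₁ ⊔ a₁ⱼ) ⊓ a_j for 2 ≤ j ≤ d, b₁ⱼ := (b₁ ⊔ b_j) ⊓ a₁ⱼ, b_⊥ := a_⊥, and b_⊤ := b₁ ⊔ b₂ ⊔ … ⊔ b_d. Then (b_⊥, b_⊤, b₁,…,b_d, b₁₂,…,b₁d) is a d-frame in L; moreover, if b₁ = a₁ then this frame coincides with ā (i.e., b_j = a_j, b₁ⱼ = a₁ⱼ, and b_⊤ = a_⊤). -/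
/-- A `d`-frame in a bounded modular lattice: elements `abot ≤ atop`,
`a i` (the `aᵢ`, with `a 0` playing the role of `a₁`) and `c j` (the `a₁ⱼ` for `j ≠ 0`),
all in the interval `[abot, atop]`, such that the `a i` are independent over `abot`
with join `atop`, and `a 0 ⊔ c j = a j ⊔ c j = a 0 ⊔ a j`,
`a 0 ⊓ c j = a j ⊓ c j = abot` for `j ≠ 0`. -/
def IsDFrame {L : Type*} [Lattice L] [BoundedOrder L] {d : ℕ} [NeZero d]
    (abot atop : L) (a c : Fin d → L) : Prop :=
  abot ≤ atop ∧
  (∀ i, abot ≤ a i ∧ a i ≤ atop) ∧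
  (∀ j, j ≠ 0 → abot ≤ c j ∧ c j ≤ atop) ∧
  (∀ i, a i ⊓ (Finset.univ.erase i).sup a = abot) ∧
  Finset.univ.sup a = atop ∧
  (∀ j, j ≠ 0 →
    a 0 ⊔ c j = a 0 ⊔ a j ∧ a j ⊔ c j = a 0 ⊔ a j ∧
    a 0 ⊓ c j = abot ∧ a j ⊓ c j = abot)

theorem stmt_1 {L : Type*} [Lattice L] [BoundedOrder L] [IsModularLattice L]
    (k : ℕ) (abot atop : L) (a c : Fin (k + 2) → L)
    (hframe : IsDFrame abot atop a c)
    (b₁ : L) (hb₁bot : abot ≤ b₁) (hb₁top : b₁ ≤ a 0)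
    (b : Fin (k + 2) → L)
    (hb : b = fun j => if j = 0 then b₁ else (b₁ ⊔ c j) ⊓ a j)
    (c' : Fin (k + 2) → L)
    (hc' : c' = fun j => (b₁ ⊔ b j) ⊓ c j) :
    IsDFrame abot (Finset.univ.sup b) b c' ∧
    (b₁ = a 0 →
      (∀ i, b i = a i) ∧ (∀ j, j ≠ 0 → c' j = c j) ∧ Finset.univ.sup b = atop) := by
  obtain ⟨habt, haI, hcI, hind, hasup, hcp⟩ := hframe
  have hb0 : b 0 = b₁ := by rw [hb]; simp
  have hbj : ∀ j : Fin (k + 2), j ≠ 0 → b j = (b₁ ⊔ c j) ⊓ a j := by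
    intro j hj; rw [hb]; simp [hj]
  have hc'j : ∀ j : Fin (k + 2), c' j = (b₁ ⊔ b j) ⊓ c j := fun j => by rw [hc']
  have hba : ∀ i, b i ≤ a i := by
    intro i
    by_cases h : i = 0
    · rw [h, hb0]; exact hb₁top
    · rw [hbj i h]; exact inf_le_right
  have hbbot : ∀ i, abot ≤ b i := by
    intro i
    by_cases h : i = 0
    · rw [h, hb0]; exact hb₁bot
    · rw [hbj i h]
      exact le_inf (hb₁bot.trans le_sup_left) (haI i).1
  have hbtop : ∀ i, b i ≤ Finset.univ.sup b := fun i => Finset.le_sup (Finset.mem_univ i)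
  -- key: b j ⊔ c j = b₁ ⊔ c j for j ≠ 0
  have hjoin : ∀ j : Fin (k + 2), j ≠ 0 → b j ⊔ c j = b₁ ⊔ c j := by
    intro j hj
    obtain ⟨h1, h2, _, _⟩ := hcp j hj
    rw [hbj j hj, inf_sup_assoc_of_le _ le_sup_right, h2]
    exact inf_eq_left.2 ((sup_le_sup_right hb₁top _).trans h1.le)
  have hble : ∀ j : Fin (k + 2), j ≠ 0 → b j ≤ b₁ ⊔ c j := by
    intro j hj; rw [hbj j hj]; exact inf_le_left
  have hc'bot : ∀ j : Fin (k + 2), j ≠ 0 → abot ≤ c' j := by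
    intro j hj
    rw [hc'j]
    exact le_inf (hb₁bot.trans le_sup_left) (hcI j hj).1
  constructor
  · refine ⟨(hbbot 0).trans (hbtop 0), fun i => ⟨hbbot i, hbtop i⟩,
      fun j hj => ⟨hc'bot j hj, ?_⟩, ?_, rfl, ?_⟩
    · -- c' j ≤ sup b
      rw [hc'j]
      exact inf_le_left.trans (sup_le (hb0 ▸ hbtop 0) (hbtop j))
    · -- independence
      intro i
      refine le_antisymm ?_ (le_inf (hbbot i) ?_)
      · calc b i ⊓ (Finset.univ.erase i).sup b
            ≤ a i ⊓ (Finset.univ.erase i).sup a :=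
              inf_le_inf (hba i) (Finset.sup_mono_fun fun j _ => hba j)
          _ = abot := hind i
      · -- abot ≤ sup over erase i
        obtain ⟨j, hji⟩ : ∃ j : Fin (k + 2), j ≠ i := by
          rcases eq_or_ne i 0 with rfl | h
          · exact ⟨1, one_ne_zero⟩
          · exact ⟨0, Ne.symm h⟩
        exact (hbbot j).trans (Finset.le_sup (Finset.mem_erase.2 ⟨hji, Finset.mem_univ j⟩))
    · -- the c' relations
      intro j hj
      obtain ⟨h1, h2, h3, h4⟩ := hcp j hj
      refine ⟨?_, ?_, ?_, ?_⟩
      · rw [hb0, hc'j, inf_comm, ← sup_inf_assoc_of_le _ le_sup_left]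
        exact inf_eq_right.2 (sup_le le_sup_left (hble j hj))
      · rw [hb0, hc'j, inf_comm, ← sup_inf_assoc_of_le _ le_sup_right, hjoin j hj]
        exact inf_eq_right.2 (sup_le le_sup_left (hble j hj))
      · refine le_antisymm ?_ (le_inf (hb0 ▸ hbbot 0) (hc'bot j hj))
        rw [hb0, hc'j]
        calc b₁ ⊓ ((b₁ ⊔ b j) ⊓ c j) ≤ a 0 ⊓ c j :=
              inf_le_inf hb₁top inf_le_right
          _ = abot := h3
      · refine le_antisymm ?_ (le_inf (hbbot j) (hc'bot j hj))
        rw [hc'j]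
        calc b j ⊓ ((b₁ ⊔ b j) ⊓ c j) ≤ a j ⊓ c j :=
              inf_le_inf (hba j) inf_le_right
          _ = abot := h4
  · rintro rfl
    have hbeq : ∀ i, b i = a i := by
      intro i
      by_cases h : i = 0
      · rw [h, hb0]
      · obtain ⟨h1, h2, _, _⟩ := hcp i h
        rw [hbj i h, h1]
        exact inf_eq_right.2 le_sup_right
    refine ⟨hbeq, fun j hj => ?_, ?_⟩
    · obtain ⟨h1, h2, _, _⟩ := hcp j hj
      rw [hc'j, hbeq j]
      refine inf_eq_right.2 (le_sup_right.trans h2.le)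
    · rw [Finset.sup_congr rfl fun i _ => hbeq i, hasup]
end

section
/- Let L be a modular ortholattice, d ≥ 2, and let ā be an orthogonal d-frame in L. Given b₁ ≤ a₁, define b_j := (b₁ ⊔ a₁ⱼ) ⊓ a_j for 2 ≤ j ≤ d, b₁ⱼ := (b₁ ⊔ b_j) ⊓ a₁ⱼ, b_⊥ := ⊥, and b_⊤ := b₁ ⊔ … ⊔ b_d. Then (b_⊥, b_⊤, b₁,…,b_d, b₁₂,…,b₁d) is an orthogonal d-frame in L; moreover, if b₁ = a₁ then this frame coincides with ā. -/
/-- An orthogonal `d`-frame in a modular ortholattice (with orthocomplementation `compl`):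
a `d`-frame with `a_⊥ = ⊥` and `a i ≤ (a j)ᶜ` for `i ≠ j`. -/
def IsOrthoDFrame {L : Type*} [Lattice L] [BoundedOrder L] {d : ℕ} [NeZero d]
    (compl : L → L) (atop : L) (a c : Fin d → L) : Prop :=
  IsDFrame (⊥ : L) atop a c ∧ ∀ i j, i ≠ j → a i ≤ compl (a j)

theorem stmt_2 {L : Type*} [Lattice L] [BoundedOrder L] [IsModularLattice L]
    (compl : L → L)
    (h_le : ∀ a b : L, a ≤ b ↔ compl b ≤ compl a)
    (h_inv : ∀ a : L, compl (compl a) = a)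
    (h_inf : ∀ a : L, a ⊓ compl a = ⊥)
    (h_sup : ∀ a : L, a ⊔ compl a = ⊤)
    (k : ℕ) (atop : L) (a c : Fin (k + 2) → L)
    (hframe : IsOrthoDFrame compl atop a c)
    (b₁ : L) (hb₁ : b₁ ≤ a 0)
    (b : Fin (k + 2) → L)
    (hb : b = fun j => if j = 0 then b₁ else (b₁ ⊔ c j) ⊓ a j)
    (c' : Fin (k + 2) → L)
    (hc' : c' = fun j => (b₁ ⊔ b j) ⊓ c j) :
    IsOrthoDFrame compl (Finset.univ.sup b) b c' ∧
    (b₁ = a 0 →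
      (∀ i, b i = a i) ∧ (∀ j, j ≠ 0 → c' j = c j) ∧ Finset.univ.sup b = atop) := by
  obtain ⟨⟨-, hbound, hcbound, hindep, hsup, hrel⟩, horth⟩ := hframe
  have hb0 : b 0 = b₁ := by rw [hb]; simp
  have hbj : ∀ j : Fin (k + 2), j ≠ 0 → b j = (b₁ ⊔ c j) ⊓ a j := by
    intro j hj; rw [hb]; simp [hj]
  have hc'j : ∀ j : Fin (k + 2), c' j = (b₁ ⊔ b j) ⊓ c j := by
    intro j; rw [hc']
  have hba : ∀ i, b i ≤ a i := by
    intro i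
    by_cases hi : i = 0
    · subst hi; rw [hb0]; exact hb₁
    · rw [hbj i hi]; exact inf_le_right
  -- key: b₁ ≤ b j ⊔ c j for j ≠ 0
  have hkey : ∀ j : Fin (k + 2), j ≠ 0 → b₁ ≤ b j ⊔ c j := by
    intro j hj
    obtain ⟨h1, h2, h3, h4⟩ := hrel j hj
    have hmod : ((b₁ ⊔ c j) ⊓ a j) ⊔ c j = (b₁ ⊔ c j) ⊓ (a j ⊔ c j) := by
      rw [inf_sup_assoc_of_le _ le_sup_right]
    rw [hbj j hj, hmod, h2]
    exact le_inf le_sup_left (hb₁.trans le_sup_left)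
  have hrel' : ∀ j : Fin (k + 2), j ≠ 0 →
      b 0 ⊔ c' j = b 0 ⊔ b j ∧ b j ⊔ c' j = b 0 ⊔ b j ∧
      b 0 ⊓ c' j = ⊥ ∧ b j ⊓ c' j = ⊥ := by
    intro j hj
    obtain ⟨h1, h2, h3, h4⟩ := hrel j hj
    have hbjle : b j ≤ b₁ ⊔ c j := by rw [hbj j hj]; exact inf_le_left
    refine ⟨?_, ?_, ?_, ?_⟩
    · rw [hc'j, hb0, inf_comm (b₁ ⊔ b j),
        ← sup_inf_assoc_of_le _ (le_sup_left : b₁ ≤ b₁ ⊔ b j)]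
      exact inf_eq_right.2 (sup_le le_sup_left hbjle)
    · rw [hc'j, hb0, inf_comm (b₁ ⊔ b j),
        ← sup_inf_assoc_of_le _ (le_sup_right : b j ≤ b₁ ⊔ b j)]
      exact inf_eq_right.2 (sup_le (hkey j hj) le_sup_left)
    · rw [hc'j, hb0, ← inf_assoc, inf_eq_left.2 (le_sup_left : b₁ ≤ b₁ ⊔ b j)]
      exact le_antisymm (le_trans (inf_le_inf_right _ hb₁) h3.le) bot_le
    · rw [hc'j, ← inf_assoc, inf_eq_left.2 (le_sup_right : b j ≤ b₁ ⊔ b j)]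
      exact le_antisymm (le_trans (inf_le_inf_right _ (hba j)) h4.le) bot_le
  refine ⟨⟨⟨bot_le, fun i => ⟨bot_le, Finset.le_sup (Finset.mem_univ i)⟩, ?_, ?_, rfl, hrel'⟩, ?_⟩, ?_⟩
  · intro j hj
    refine ⟨bot_le, ?_⟩
    calc c' j ≤ b₁ ⊔ b j := by rw [hc'j]; exact inf_le_left
    _ = b 0 ⊔ b j := by rw [hb0]
    _ ≤ _ := sup_le (Finset.le_sup (Finset.mem_univ 0)) (Finset.le_sup (Finset.mem_univ j))
  · intro i
    refine le_antisymm ?_ bot_le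
    calc b i ⊓ (Finset.univ.erase i).sup b
        ≤ a i ⊓ (Finset.univ.erase i).sup a :=
          inf_le_inf (hba i) (Finset.sup_mono_fun fun j _ => hba j)
      _ = ⊥ := hindep i
  · intro i j hij
    exact ((hba i).trans (horth i j hij)).trans ((h_le (b j) (a j)).1 (hba j))
  · intro h
    subst h
    have hbe : ∀ i, b i = a i := by
      intro i
      by_cases hi : i = 0
      · subst hi; exact hb0
      · obtain ⟨h1, h2, h3, h4⟩ := hrel i hi
        rw [hbj i hi, h1, inf_eq_right.2 le_sup_right]
    refine ⟨hbe, ?_, ?_⟩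
    · intro j hj
      obtain ⟨h1, h2, h3, h4⟩ := hrel j hj
      rw [hc'j, hbe j, inf_eq_right.2 (le_sup_right.trans h2.le)]
    · rw [Finset.sup_congr rfl fun i _ => hbe i]; exact hsup
end

section
/- Let L be a bounded modular lattice of height d (every chain x₀ < x₁ < … < x_k in L satisfies k ≤ d, and some chain of length d exists), and let ā = (a_⊥, a_⊤, a₁,…,a_d, a₁₂,…,a₁d) be a d-frame in L. If a_i ≠ a_⊥ for some i, then a_j ≠ a_⊥ for all j, a_⊥ = ⊥, a_⊤ = ⊤, and each a_j is an atom of L. -/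
/-!
Degeneracy propagates through the frame: if `a₁ = a_⊥` then each `a₁ⱼ` collapses onto `aⱼ`,
forcing `aⱼ = a_⊥`, and symmetrically. Once every `aⱼ` lies strictly above `a_⊥`, independence
makes `a_⊥ < aⱼ < aⱼ ⊔ a_{k₁} < ⋯ < a_⊤` a chain of length `d`, listing `aⱼ` first. In a lattice
of height `d` such a chain cannot be lengthened: it starts at `⊥`, ends at `⊤`, and its first
step is a covering, so `aⱼ` is an atom.
-/

open Finset

namespace LTSeries

variable {α : Type*} [PartialOrder α]

lemma head_eq_bot_of_forall_length_le [OrderBot α] {p : LTSeries α}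
    (hmax : ∀ q : LTSeries α, q.length ≤ p.length) : p.head = ⊥ := by
  by_contra! h
  have := hmax (p.cons ⊥ h.bot_lt)
  simp at this

lemma last_eq_top_of_forall_length_le [OrderTop α] {p : LTSeries α}
    (hmax : ∀ q : LTSeries α, q.length ≤ p.length) : p.last = ⊤ := by
  by_contra! h
  have := hmax (p.snoc ⊤ h.lt_top)
  simp at this

lemma covBy_head_of_forall_length_le {p : LTSeries α} {x : α} (hx : x < p.head)
    (hmax : ∀ q : LTSeries α, q.length ≤ p.length + 1) : x ⋖ p.head := by
  refine ⟨hx, fun b hxb hbp => ?_⟩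
  have := hmax ((p.cons b hbp).cons x (by simpa using hxb))
  simp at this

end LTSeries

section Independent

variable {L : Type*} [Lattice L] [OrderBot L] {ι : Type*} [DecidableEq ι]

lemma exists_ltSeries_head_last_of_not_le_sup_erase (f : ι → L) (b : L) (s : Finset ι)
    (h : ∀ i ∈ s, ¬ f i ≤ b ⊔ (s.erase i).sup f) :
    ∃ p : LTSeries L, p.length = #s ∧ p.head = b ∧ p.last = b ⊔ s.sup f := by
  induction s using Finset.induction_on with
  | empty => exact ⟨RelSeries.singleton _ b, rfl, rfl, by simp [RelSeries.last_singleton]⟩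
  | insert i s hi ih =>
    have hs : ∀ k ∈ s, ¬ f k ≤ b ⊔ (s.erase k).sup f := fun k hk hle =>
      h k (mem_insert_of_mem hk) <| hle.trans <| sup_le_sup_left
        (Finset.sup_mono <| erase_subset_erase k (subset_insert i s)) b
    obtain ⟨p, hlen, hhead, hlast⟩ := ih hs
    have hlt : p.last < b ⊔ (insert i s).sup f := by
      have hi' := h i (mem_insert_self i s)
      rw [erase_insert hi] at hi'
      rw [hlast, sup_insert, sup_comm (f i), ← sup_assoc]
      exact left_lt_sup.2 hi'
    exact ⟨p.snoc _ hlt, by simp [hlen, hi], by simp [hhead], by simp⟩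

lemma exists_ltSeries_of_inf_sup_erase_eq [Fintype ι] {a : ι → L} {e : L}
    (hind : ∀ i, a i ⊓ (univ.erase i).sup a = e) (hne : ∀ i, a i ≠ e) (j : ι) :
    ∃ q : LTSeries L, q.length + 1 = Fintype.card ι ∧ q.head = a j ∧ q.last = univ.sup a := by
  have hsup_erase : ∀ i ∈ univ.erase j, a j ⊔ ((univ.erase j).erase i).sup a
      = (univ.erase i).sup a := fun i hi => by
    rw [← sup_insert, erase_right_comm,
      insert_erase (mem_erase.2 ⟨(ne_of_mem_erase hi).symm, mem_univ j⟩)]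
  obtain ⟨q, hlen, hhead, hlast⟩ := exists_ltSeries_head_last_of_not_le_sup_erase a (a j)
    (univ.erase j) fun i hi hle => hne i <| by
      rw [hsup_erase i hi] at hle
      rw [← hind i, inf_eq_left.2 hle]
  refine ⟨q, ?_, hhead, ?_⟩
  · rw [hlen, card_erase_of_mem (mem_univ j), card_univ]
    exact Nat.sub_add_cancel (Fintype.card_pos_iff.2 ⟨j⟩)
  · rw [hlast, ← sup_insert, insert_erase (mem_univ j)]

end Independent

namespace IsDFrame

variable {L : Type*} [Lattice L] [BoundedOrder L] {d : ℕ} [NeZero d] {abot atop : L}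
  {a c : Fin d → L}

lemma a_zero_ne_of_a_ne (hf : IsDFrame abot atop a c) {i : Fin d} (hi : a i ≠ abot) :
    a 0 ≠ abot := by
  obtain ⟨-, ha, hc, -, -, hcj⟩ := hf
  rcases eq_or_ne i 0 with rfl | hi0
  · exact hi
  intro h0
  obtain ⟨hsup, -, -, hinf⟩ := hcj i hi0
  rw [h0, sup_eq_right.2 (hc i hi0).1, sup_eq_right.2 (ha i).1] at hsup
  rw [hsup, inf_idem] at hinf
  exact hi hinf

lemma a_ne_of_a_zero_ne (hf : IsDFrame abot atop a c) (h0 : a 0 ≠ abot) (j : Fin d) :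
    a j ≠ abot := by
  obtain ⟨-, ha, hc, -, -, hcj⟩ := hf
  rcases eq_or_ne j 0 with rfl | hj0
  · exact h0
  intro hj
  obtain ⟨-, hsup, hinf, -⟩ := hcj j hj0
  rw [hj, sup_eq_right.2 (hc j hj0).1, sup_eq_left.2 (ha 0).1] at hsup
  rw [hsup, inf_idem] at hinf
  exact h0 hinf

end IsDFrame

theorem stmt_3_general {L : Type*} [Lattice L] [BoundedOrder L]
    (d : ℕ) [NeZero d]
    (hmax : ∀ (k : ℕ) (x : Fin (k + 1) → L), StrictMono x → k ≤ d)
    (abot atop : L) (a c : Fin d → L)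
    (hframe : IsDFrame abot atop a c)
    (i : Fin d) (hi : a i ≠ abot) :
    (∀ j, a j ≠ abot) ∧ abot = ⊥ ∧ atop = ⊤ ∧ ∀ j, IsAtom (a j) := by
  have hne : ∀ j, a j ≠ abot := hframe.a_ne_of_a_zero_ne (hframe.a_zero_ne_of_a_ne hi)
  obtain ⟨-, ha, -, hind, hsup, -⟩ := hframe
  have hlt : ∀ j, abot < a j := fun j => (ha j).1.lt_of_ne' (hne j)
  have hchain : ∀ j, ∃ q : LTSeries L, q.length + 1 = d ∧ q.head = a j ∧ q.last = atop := by
    simpa [hsup] using exists_ltSeries_of_inf_sup_erase_eq hind hne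
  have hlen : ∀ p : LTSeries L, p.length ≤ d := fun p => hmax _ p p.strictMono
  obtain ⟨q, hqlen, hqhead, hqlast⟩ := hchain i
  set p := q.cons abot (hqhead ▸ hlt i)
  have hp : ∀ r : LTSeries L, r.length ≤ p.length := fun r => by simpa [p, hqlen] using hlen r
  have habot : abot = ⊥ := LTSeries.head_eq_bot_of_forall_length_le hp
  have hatop : atop = ⊤ := by simpa [p, hqlast] using LTSeries.last_eq_top_of_forall_length_le hp
  refine ⟨hne, habot, hatop, fun j => ?_⟩
  obtain ⟨q, hqlen, hqhead, -⟩ := hchain j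
  rw [← bot_covBy_iff, ← habot, ← hqhead]
  exact LTSeries.covBy_head_of_forall_length_le (hqhead ▸ hlt j) (hqlen ▸ hlen)

theorem stmt_3 {L : Type*} [Lattice L] [BoundedOrder L] [IsModularLattice L]
    (d : ℕ) [NeZero d]
    (hmax : ∀ (k : ℕ) (x : Fin (k + 1) → L), StrictMono x → k ≤ d)
    (hchain : ∃ x : Fin (d + 1) → L, StrictMono x)
    (abot atop : L) (a c : Fin d → L)
    (hframe : IsDFrame abot atop a c)
    (i : Fin d) (hi : a i ≠ abot) :
    (∀ j, a j ≠ abot) ∧ abot = ⊥ ∧ atop = ⊤ ∧ ∀ j, IsAtom (a j) :=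
  stmt_3_general d hmax abot atop a c hframe i hi
end

section
/- Let L be a bounded modular lattice and let (a_⊥, a_⊤, a₁, a₂, a₃, a₁₂, a₁₃) be a 3-frame in L. Define a₂₃ := (a₂ ⊔ a₃) ⊓ (a₁₂ ⊔ a₁₃), and set a_{ji} := a_{ij} for i < j. Then: a₂₃ ⊔ a₂ = a₂₃ ⊔ a₃ = a₂ ⊔ a₃, a₂₃ ⊓ a₂ = a₂₃ ⊓ a₃ = a_⊥, and for every permutation (i,j,k) of (1,2,3): (a_i ⊔ a_j) ⊓ (a_{ik} ⊔ a_{kj}) = a_{ij}. -/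
theorem stmt_4 {L : Type*} [Lattice L] [BoundedOrder L] [IsModularLattice L]
    (abot atop a1 a2 a3 a12 a13 : L)
    (hbt : abot ≤ atop)
    (ha1 : abot ≤ a1 ∧ a1 ≤ atop) (ha2 : abot ≤ a2 ∧ a2 ≤ atop)
    (ha3 : abot ≤ a3 ∧ a3 ≤ atop)
    (ha12 : abot ≤ a12 ∧ a12 ≤ atop) (ha13 : abot ≤ a13 ∧ a13 ≤ atop)
    (hind1 : a1 ⊓ (a2 ⊔ a3) = abot) (hind2 : a2 ⊓ (a1 ⊔ a3) = abot)
    (hind3 : a3 ⊓ (a1 ⊔ a2) = abot)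
    (hsup : a1 ⊔ a2 ⊔ a3 = atop)
    (h12a : a1 ⊔ a12 = a1 ⊔ a2) (h12b : a2 ⊔ a12 = a1 ⊔ a2)
    (h12c : a1 ⊓ a12 = abot) (h12d : a2 ⊓ a12 = abot)
    (h13a : a1 ⊔ a13 = a1 ⊔ a3) (h13b : a3 ⊔ a13 = a1 ⊔ a3)
    (h13c : a1 ⊓ a13 = abot) (h13d : a3 ⊓ a13 = abot)
    (a23 : L) (ha23 : a23 = (a2 ⊔ a3) ⊓ (a12 ⊔ a13)) :
    (a23 ⊔ a2 = a2 ⊔ a3 ∧ a23 ⊔ a3 = a2 ⊔ a3 ∧ a23 ⊓ a2 = abot ∧ a23 ⊓ a3 = abot) ∧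
    -- (i,j,k) = (1,2,3), (1,3,2), (2,1,3), (2,3,1), (3,1,2), (3,2,1),
    -- where a_{ji} := a_{ij} for i < j:
    ((a1 ⊔ a2) ⊓ (a13 ⊔ a23) = a12 ∧
     (a1 ⊔ a3) ⊓ (a12 ⊔ a23) = a13 ∧
     (a2 ⊔ a1) ⊓ (a23 ⊔ a13) = a12 ∧
     (a2 ⊔ a3) ⊓ (a12 ⊔ a13) = a23 ∧
     (a3 ⊔ a1) ⊓ (a23 ⊔ a12) = a13 ∧
     (a3 ⊔ a2) ⊓ (a13 ⊔ a12) = a23) := by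
  have hL12 : a12 ≤ a1 ⊔ a2 := h12a ▸ le_sup_right
  have hL13 : a13 ≤ a1 ⊔ a3 := h13a ▸ le_sup_right
  -- (a1 ⊔ a3) ⊓ (a1 ⊔ a2) = a1
  have hA1 : (a1 ⊔ a3) ⊓ (a1 ⊔ a2) = a1 := by
    rw [sup_inf_assoc_of_le _ (le_sup_left : a1 ≤ a1 ⊔ a2), hind3,
      sup_eq_left.mpr ha1.1]
  have hA1' : (a1 ⊔ a2) ⊓ (a1 ⊔ a3) = a1 := by rw [inf_comm, hA1]
  -- a13 ⊓ (a1 ⊔ a2) = abot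
  have h13_12 : a13 ⊓ (a1 ⊔ a2) = abot := by
    have h1 : a13 ⊓ (a1 ⊔ a2) ≤ a1 := (inf_le_inf_right _ hL13).trans hA1.le
    refine le_antisymm ?_ (le_inf ha13.1 (ha1.1.trans le_sup_left))
    calc a13 ⊓ (a1 ⊔ a2) ≤ a13 ⊓ a1 := le_inf inf_le_left h1
      _ = abot := by rw [inf_comm, h13c]
  -- a12 ⊓ (a1 ⊔ a3) = abot
  have h12_13 : a12 ⊓ (a1 ⊔ a3) = abot := by
    have h1 : a12 ⊓ (a1 ⊔ a3) ≤ a1 := (inf_le_inf_right _ hL12).trans hA1'.le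
    refine le_antisymm ?_ (le_inf ha12.1 (ha1.1.trans le_sup_left))
    calc a12 ⊓ (a1 ⊔ a3) ≤ a12 ⊓ a1 := le_inf inf_le_left h1
      _ = abot := by rw [inf_comm, h12c]
  -- (a1 ⊔ a2) ⊓ (a12 ⊔ a13) = a12
  have key12 : (a1 ⊔ a2) ⊓ (a12 ⊔ a13) = a12 := by
    rw [inf_comm, sup_inf_assoc_of_le _ hL12, h13_12, sup_eq_left.mpr ha12.1]
  -- (a1 ⊔ a3) ⊓ (a12 ⊔ a13) = a13
  have key13 : (a1 ⊔ a3) ⊓ (a12 ⊔ a13) = a13 := by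
    rw [inf_comm, sup_comm a12 a13, sup_inf_assoc_of_le _ hL13, h12_13,
      sup_eq_left.mpr ha13.1]
  -- joins with atop
  have t2 : a2 ⊔ (a12 ⊔ a13) = atop := by
    calc a2 ⊔ (a12 ⊔ a13) = (a1 ⊔ a2) ⊔ a13 := by rw [← sup_assoc, h12b]
      _ = (a1 ⊔ a13) ⊔ a2 := by
          rw [sup_comm a1 a2, sup_assoc, sup_comm a2 (a1 ⊔ a13)]
      _ = atop := by rw [h13a, sup_assoc, sup_comm a3 a2, ← sup_assoc, hsup]
  have t3 : a3 ⊔ (a12 ⊔ a13) = atop := by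
    calc a3 ⊔ (a12 ⊔ a13) = (a3 ⊔ a13) ⊔ a12 := by
          rw [sup_comm a12 a13, ← sup_assoc]
      _ = (a1 ⊔ a12) ⊔ a3 := by rw [h13b, sup_assoc, sup_comm a3 a12, ← sup_assoc]
      _ = atop := by rw [h12a, hsup]
  have ht13 : a13 ⊔ (a2 ⊔ a3) = atop := by
    rw [sup_comm a13 (a2 ⊔ a3), sup_assoc, h13b, ← sup_assoc, sup_comm a2 a1, hsup]
  have ht12 : a12 ⊔ (a2 ⊔ a3) = atop := by
    rw [← sup_assoc, sup_comm a12 a2, h12b, hsup]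
  -- part 1
  have j2 : a23 ⊔ a2 = a2 ⊔ a3 := by
    rw [ha23, sup_comm ((a2 ⊔ a3) ⊓ (a12 ⊔ a13)) a2, inf_comm (a2 ⊔ a3) (a12 ⊔ a13),
      ← sup_inf_assoc_of_le (a12 ⊔ a13) (le_sup_left : a2 ≤ a2 ⊔ a3), t2, inf_eq_right.mpr (sup_le ha2.2 ha3.2)]
  have j3 : a23 ⊔ a3 = a2 ⊔ a3 := by
    rw [ha23, sup_comm ((a2 ⊔ a3) ⊓ (a12 ⊔ a13)) a3, inf_comm (a2 ⊔ a3) (a12 ⊔ a13),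
      ← sup_inf_assoc_of_le (a12 ⊔ a13) (le_sup_right : a3 ≤ a2 ⊔ a3), t3, inf_eq_right.mpr (sup_le ha2.2 ha3.2)]
  have m2 : a2 ⊓ (a12 ⊔ a13) = abot := by
    calc a2 ⊓ (a12 ⊔ a13) = (a2 ⊓ (a1 ⊔ a2)) ⊓ (a12 ⊔ a13) := by
          rw [inf_eq_left.mpr (le_sup_right : a2 ≤ a1 ⊔ a2)]
      _ = a2 ⊓ ((a1 ⊔ a2) ⊓ (a12 ⊔ a13)) := inf_assoc _ _ _
      _ = abot := by rw [key12, h12d]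
  have m3 : a3 ⊓ (a12 ⊔ a13) = abot := by
    calc a3 ⊓ (a12 ⊔ a13) = (a3 ⊓ (a1 ⊔ a3)) ⊓ (a12 ⊔ a13) := by
          rw [inf_eq_left.mpr (le_sup_right : a3 ≤ a1 ⊔ a3)]
      _ = a3 ⊓ ((a1 ⊔ a3) ⊓ (a12 ⊔ a13)) := inf_assoc _ _ _
      _ = abot := by rw [key13, h13d]
  have i2 : a23 ⊓ a2 = abot := by
    rw [ha23, inf_comm ((a2 ⊔ a3) ⊓ (a12 ⊔ a13)) a2, ← inf_assoc,
      inf_eq_left.mpr (le_sup_left : a2 ≤ a2 ⊔ a3), m2]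
  have i3 : a23 ⊓ a3 = abot := by
    rw [ha23, inf_comm ((a2 ⊔ a3) ⊓ (a12 ⊔ a13)) a3, ← inf_assoc,
      inf_eq_left.mpr (le_sup_right : a3 ≤ a2 ⊔ a3), m3]
  -- a13 ⊔ a23 = a12 ⊔ a13, a12 ⊔ a23 = a12 ⊔ a13
  have s13 : a13 ⊔ a23 = a12 ⊔ a13 := by
    rw [ha23, ← sup_inf_assoc_of_le (a2 ⊔ a3) (le_sup_right : a13 ≤ a12 ⊔ a13),
      ht13, inf_eq_right.mpr (sup_le ha12.2 ha13.2)]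
  have s12 : a12 ⊔ a23 = a12 ⊔ a13 := by
    rw [ha23, ← sup_inf_assoc_of_le (a2 ⊔ a3) (le_sup_left : a12 ≤ a12 ⊔ a13),
      ht12, inf_eq_right.mpr (sup_le ha12.2 ha13.2)]
  refine ⟨⟨j2, j3, i2, i3⟩, ?_, ?_, ?_, ha23.symm, ?_, ?_⟩
  · rw [s13, key12]
  · rw [s12, key13]
  · rw [sup_comm a2 a1, sup_comm a23 a13, s13, key12]
  · rw [sup_comm a3 a1, sup_comm a23 a12, s12, key13]
  · rw [sup_comm a3 a2, sup_comm a13 a12, ← ha23]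
end

section
/- Let H be a finite-dimensional real inner product space, let A, B be subspaces with A ≤ Bᗮ, and let ε : A → B be a linear isomorphism. Then ε preserves the inner product (⟪ε(v), ε(v')⟫ = ⟪v, v'⟫ for all v, v' ∈ A) if and only if { v - ε(v) : v ∈ A }ᗮ ⊓ (A ⊔ B) = { v + ε(v) : v ∈ A }. -/
/-!
Write `v ↦ v - ε v` and `v ↦ v + ε v` for the two graph maps `A → A ⊔ B`. Since `A ⟂ B`,
`⟪v - ε v, w + ε w⟫ = ⟪v, w⟫ - ⟪ε v, ε w⟫`, so `ε` is an isometry exactly when the second graph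
is orthogonal to the first. As `A ⊓ B = ⊥` both graph maps are injective, so both graphs and the
relative orthogonal complement of the first one inside `A ⊔ B` have dimension `dim A`, and
the isometric case gives an inclusion of the second graph in that complement.
-/

open LinearMap Module

namespace Submodule

section Graph

variable {R M : Type*} [Ring R] [AddCommGroup M] [Module R M] {A B : Submodule R M}

theorem injective_subtype_add_subtype_comp (hAB : Disjoint A B) (φ : A →ₗ[R] B) :
    Function.Injective (A.subtype + B.subtype ∘ₗ φ) := by
  rw [← ker_eq_bot, eq_bot_iff]
  intro v hv
  have hv' : (v : M) = -(φ v : M) := eq_neg_of_add_eq_zero_left hv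
  have hvB : (v : M) ∈ B := hv' ▸ B.neg_mem (φ v).2
  simpa using (disjoint_def.1 hAB) v v.2 hvB

theorem subtype_sub_subtype_comp_eq (φ : A →ₗ[R] B) :
    A.subtype - B.subtype ∘ₗ φ = A.subtype + B.subtype ∘ₗ (-φ) := by
  rw [comp_neg, sub_eq_add_neg]

theorem injective_subtype_sub_subtype_comp (hAB : Disjoint A B) (φ : A →ₗ[R] B) :
    Function.Injective (A.subtype - B.subtype ∘ₗ φ) := by
  rw [subtype_sub_subtype_comp_eq]
  exact injective_subtype_add_subtype_comp hAB (-φ)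

theorem range_subtype_add_subtype_comp_le_sup (φ : A →ₗ[R] B) :
    range (A.subtype + B.subtype ∘ₗ φ) ≤ A ⊔ B :=
  (range_add_le _ _).trans <| by
    rw [range_subtype]
    exact sup_le_sup_left ((range_comp_le_range _ _).trans_eq B.range_subtype) A

theorem range_subtype_sub_subtype_comp_le_sup (φ : A →ₗ[R] B) :
    range (A.subtype - B.subtype ∘ₗ φ) ≤ A ⊔ B := by
  rw [subtype_sub_subtype_comp_eq]
  exact range_subtype_add_subtype_comp_le_sup (-φ)

end Graph

section InnerProduct

variable {H : Type*} [NormedAddCommGroup H] [InnerProductSpace ℝ H] {A B : Submodule ℝ H}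

theorem inner_subtype_sub_subtype_comp_add (hAB : A ≤ Bᗮ) (φ : A →ₗ[ℝ] B) (v w : A) :
    inner ℝ ((A.subtype - B.subtype ∘ₗ φ) v) ((A.subtype + B.subtype ∘ₗ φ) w) =
      inner ℝ (v : H) (w : H) - inner ℝ (φ v : H) (φ w : H) := by
  have hvφw : inner ℝ (v : H) (φ w : H) = 0 := inner_left_of_mem_orthogonal (φ w).2 (hAB v.2)
  have hφvw : inner ℝ (φ v : H) (w : H) = 0 := inner_right_of_mem_orthogonal (φ v).2 (hAB w.2)
  simp only [LinearMap.sub_apply, LinearMap.add_apply, coe_comp, Function.comp_apply, subtype_apply,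
    inner_sub_left, inner_add_right, hvφw, hφvw]
  ring

theorem range_add_le_orthogonal_range_sub_iff (hAB : A ≤ Bᗮ) (φ : A →ₗ[ℝ] B) :
    range (A.subtype + B.subtype ∘ₗ φ) ≤ (range (A.subtype - B.subtype ∘ₗ φ))ᗮ ↔
      ∀ v w : A, inner ℝ (φ v : H) (φ w : H) = inner ℝ (v : H) (w : H) := by
  simp only [SetLike.le_def, mem_range, forall_exists_index, forall_apply_eq_imp_iff,
    mem_orthogonal, inner_subtype_sub_subtype_comp_add hAB, sub_eq_zero]
  exact ⟨fun h v w => (h w v).symm, fun h w v => (h v w).symm⟩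

theorem finrank_orthogonal_range_sub_inf_sup [FiniteDimensional ℝ H] (hAB : A ≤ Bᗮ)
    (ε : A ≃ₗ[ℝ] B) :
    finrank ℝ ↥((range (A.subtype - B.subtype ∘ₗ ε.toLinearMap))ᗮ ⊓ (A ⊔ B)) =
      finrank ℝ (range (A.subtype + B.subtype ∘ₗ ε.toLinearMap)) := by
  have hdisj : Disjoint A B := (orthogonal_disjoint B).symm.mono_left hAB
  have hsup : finrank ℝ ↥(A ⊔ B) = finrank ℝ A + finrank ℝ B := by
    rw [← finrank_sup_add_finrank_inf_eq, hdisj.eq_bot, finrank_bot, add_zero]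
  have hcompl := finrank_add_inf_finrank_orthogonal
    (range_subtype_sub_subtype_comp_le_sup ε.toLinearMap)
  rw [finrank_range_of_inj (injective_subtype_sub_subtype_comp hdisj _)] at hcompl
  rw [finrank_range_of_inj (injective_subtype_add_subtype_comp hdisj _)]
  have hAB_dim : finrank ℝ A = finrank ℝ B := ε.finrank_eq
  omega

end InnerProduct

end Submodule

open Submodule in
theorem stmt_8 {H : Type*} [NormedAddCommGroup H] [InnerProductSpace ℝ H]
    [FiniteDimensional ℝ H]
    (A B : Submodule ℝ H) (hAB : A ≤ Bᗮ) (ε : A ≃ₗ[ℝ] B) :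
    (∀ v v' : A, (inner ℝ ((ε v : H)) ((ε v' : H)) : ℝ) = inner ℝ (v : H) (v' : H)) ↔
    (LinearMap.range (A.subtype - B.subtype ∘ₗ ε.toLinearMap))ᗮ ⊓ (A ⊔ B) =
      LinearMap.range (A.subtype + B.subtype ∘ₗ ε.toLinearMap) := by
  refine (range_add_le_orthogonal_range_sub_iff hAB ε.toLinearMap).symm.trans ⟨?_, ?_⟩
  · intro hle
    refine (eq_of_le_of_finrank_eq ?_ (finrank_orthogonal_range_sub_inf_sup hAB ε).symm).symm
    exact le_inf hle (range_subtype_add_subtype_comp_le_sup _)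
  · intro heq
    exact heq ▸ inf_le_left
end

section
/- Let V be a vector space over a field F, let A, B be subspaces with A ⊓ B = ⊥, and let ε : A → B be a linear isomorphism. For a linear endomorphism f of A, set ω(f) := { v - ε(f(v)) : v ∈ A } and a₁₂ := { v - ε(v) : v ∈ A }, both subspaces of V. Then (((ω(f) ⊔ A) ⊓ B) ⊔ a₁₂) ⊓ A equals the range of f (viewed as a subspace of V). -/
theorem stmt_10 {F V : Type*} [Field F] [AddCommGroup V] [Module F V]
    (A B : Submodule F V) (hAB : A ⊓ B = ⊥) (ε : A ≃ₗ[F] B)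
    (f : A →ₗ[F] A) :
    (((LinearMap.range (A.subtype - B.subtype ∘ₗ ε.toLinearMap ∘ₗ f) ⊔ A) ⊓ B) ⊔
        LinearMap.range (A.subtype - B.subtype ∘ₗ ε.toLinearMap)) ⊓ A =
      (LinearMap.range f).map A.subtype := by
  have key : ∀ z : V, z ∈ A → z ∈ B → z = 0 := by
    intro z hA hB
    have : z ∈ A ⊓ B := ⟨hA, hB⟩
    rw [hAB] at this
    simpa using this
  ext x
  simp only [Submodule.mem_inf, Submodule.mem_sup, LinearMap.mem_range,
    Submodule.mem_map, LinearMap.sub_apply, LinearMap.coe_comp, Function.comp_apply,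
    Submodule.coe_subtype, LinearEquiv.coe_coe]
  constructor
  · rintro ⟨⟨c, ⟨⟨y, ⟨w, rfl⟩, a, haA, hca⟩, hcB⟩, d, ⟨v, rfl⟩, rfl⟩, hxA⟩
    have hwa : (w : V) + a = 0 := by
      apply key
      · exact A.add_mem w.2 haA
      · have h1 : (w : V) + a = c + (ε (f w) : V) := by
          rw [← hca]; abel
        rw [h1]; exact B.add_mem hcB (ε (f w)).2
    have hc : c = -(ε (f w) : V) := by
      have h2 : c = ((w : V) + a) - (ε (f w) : V) := by rw [← hca]; abel
      rw [h2, hwa]; abel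
    have hxv : (c + ((v : V) - (ε v : V))) - (v : V) = 0 := by
      apply key
      · exact A.sub_mem hxA v.2
      · have h3 : (c + ((v : V) - (ε v : V))) - (v : V)
            = -((ε (f w) : V) + (ε v : V)) := by rw [hc]; abel
        rw [h3]
        exact B.neg_mem (B.add_mem (ε (f w)).2 (ε v).2)
    have hsum : (ε (f w) : V) + (ε v : V) = 0 := by
      have h3 : (c + ((v : V) - (ε v : V))) - (v : V)
          = -((ε (f w) : V) + (ε v : V)) := by rw [hc]; abel
      rw [h3, neg_eq_zero] at hxv
      exact hxv
    have hB0 : ε (f w) + ε v = 0 := by exact_mod_cast hsum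
    have hA0 : f w + v = 0 :=
      ε.injective (by rw [map_add, map_zero, hB0])
    have hv : f (-w) = v := by
      rw [map_neg]
      exact neg_eq_of_add_eq_zero_right hA0
    have hfin : (v : V) = c + ((v : V) - (ε v : V)) := by
      rw [hc, neg_eq_of_add_eq_zero_right hsum]; abel
    exact ⟨v, ⟨-w, hv⟩, hfin⟩
  · rintro ⟨u, ⟨y, rfl⟩, rfl⟩
    refine ⟨⟨(ε (f y) : V), ⟨⟨(-y : V) - (ε (f (-y)) : V), ⟨-y, rfl⟩, (y : V), y.2, ?_⟩,
      (ε (f y)).2⟩, ((f y : V)) - (ε (f y) : V), ⟨f y, rfl⟩, ?_⟩, (f y).2⟩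
    · rw [map_neg, map_neg]
      push_cast
      abel
    · abel
end

section
/- Every finite modular ortholattice is 2-distributive: for all x, x₀, x₁, x₂ in a finite modular ortholattice L, x ⊓ (x₀ ⊔ x₁ ⊔ x₂) = (x ⊓ (x₀ ⊔ x₁)) ⊔ (x ⊓ (x₀ ⊔ x₂)) ⊔ (x ⊓ (x₁ ⊔ x₂)). -/
/-!
Since a finite complemented modular lattice is atomistic, it suffices to show that an atom `p`
below `a ⊔ b ⊔ c` lies below `a ⊔ b`, `a ⊔ c` or `b ⊔ c`. Otherwise, after shrinking `a`, `b`, `c`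
to atoms (using modularity), the four points `a`, `b`, `c`, `p`, no three of them collinear, span
a finite projective plane `v`, and `x ↦ xᶜ ⊓ v` is a polarity of it without absolute points.
Orthogonality then makes the points of `v` a friendship graph: two points have exactly one common
neighbour, the pole of the line joining them. By the friendship theorem some point `z` is
orthogonal to all others; but three of `a`, `b`, `c`, `p` differ from `z` and span `v`, so
`z ≤ v ≤ zᶜ`, which is absurd.
-/

open Matrix

namespace SimpleGraph

variable {V : Type*} (G : SimpleGraph V)

def IsFriendship : Prop := ∀ ⦃v w : V⦄, v ≠ w → ∃! u, G.Adj v u ∧ G.Adj w u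

variable {G} [Fintype V] [DecidableEq V] [DecidableRel G.Adj]

namespace IsFriendship

variable (hG : G.IsFriendship)
include hG

theorem adjMatrix_sq_apply_of_ne {R : Type*} [Semiring R] {v w : V} (hvw : v ≠ w) :
    (G.adjMatrix R ^ 2) v w = 1 := by
  obtain ⟨u, hu, huniq⟩ := hG hvw
  have : {x ∈ G.neighborFinset v | G.Adj x w} = {u} :=
    Finset.eq_singleton_iff_unique_mem.2 ⟨by simpa [G.adj_comm w] using hu,
      fun x hx => huniq x (by simpa [G.adj_comm w] using hx)⟩
  simp only [sq, adjMatrix_mul_apply, adjMatrix_apply, Finset.sum_boole, this,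
    Finset.card_singleton, Nat.cast_one]

theorem adjMatrix_pow_three_apply_of_not_adj {R : Type*} [Semiring R] {v w : V}
    (hvw : ¬G.Adj v w) : (G.adjMatrix R ^ 3) v w = G.degree v := by
  rw [pow_succ', adjMatrix_mul_apply, ← card_neighborFinset_eq_degree, Finset.cast_card]
  refine Finset.sum_congr rfl fun u hu => hG.adjMatrix_sq_apply_of_ne ?_
  rintro rfl
  exact hvw ((G.mem_neighborFinset v u).1 hu)

theorem degree_eq_of_not_adj {v w : V} (hvw : ¬G.Adj v w) : G.degree v = G.degree w := by
  have hwv : ¬G.Adj w v := fun h => hvw h.symm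
  rw [← Nat.cast_id (G.degree v), ← Nat.cast_id (G.degree w),
    ← hG.adjMatrix_pow_three_apply_of_not_adj hvw, ← hG.adjMatrix_pow_three_apply_of_not_adj hwv,
    ((G.isSymm_adjMatrix (α := ℕ)).pow 3).apply]

theorem degree_eq_degree_of_forall_exists_not_adj (hP : ∀ v, ∃ w, v ≠ w ∧ ¬G.Adj v w) (v x : V) :
    G.degree v = G.degree x := by
  by_cases hvx : G.Adj v x
  swap
  · exact hG.degree_eq_of_not_adj hvx
  obtain ⟨w, hvw, hvw'⟩ := hP v
  obtain ⟨y, hxy, hxy'⟩ := hP x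
  have hv := hG.degree_eq_of_not_adj hvw'
  have hx := hG.degree_eq_of_not_adj hxy'
  by_cases hxw : G.Adj x w
  · by_cases hvy : G.Adj v y
    · have hwy : ¬G.Adj w y := fun hwy => hxy ((hG hvw).unique ⟨hvx, hxw.symm⟩ ⟨hvy, hwy⟩)
      rw [hv, hx, hG.degree_eq_of_not_adj hwy]
    · rw [hG.degree_eq_of_not_adj hvy, hx]
  · rw [hv, hG.degree_eq_of_not_adj fun h => hxw h.symm]

theorem adjMatrix_sq_of_regular {R : Type*} [Semiring R] {d : ℕ} (hd : G.IsRegularOfDegree d) :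
    G.adjMatrix R ^ 2 = Matrix.of fun v w => if v = w then (d : R) else 1 := by
  ext v w
  by_cases h : v = w
  · subst h; rw [sq, adjMatrix_mul_self_apply_self, hd v]; simp
  · simp [hG.adjMatrix_sq_apply_of_ne h, h]

theorem card_add_degree_of_regular [Nonempty V] {d : ℕ} (hd : G.IsRegularOfDegree d) :
    Fintype.card V + d = d * d + 1 := by
  obtain ⟨v⟩ := ‹Nonempty V›
  have hrow : (G.adjMatrix ℕ ^ 2 *ᵥ Function.const V 1) v = d + (Fintype.card V - 1) := by
    rw [hG.adjMatrix_sq_of_regular hd, mulVec, dotProduct,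
      ← Finset.add_sum_erase _ _ (Finset.mem_univ v), Finset.sum_congr rfl fun w hw => by
        rw [of_apply, if_neg (Finset.ne_of_mem_erase hw).symm]]
    simp [Finset.card_erase_of_mem, Finset.card_univ]
  have hpaths : (G.adjMatrix ℕ ^ 2 *ᵥ Function.const V 1) v = d * d := by
    have hconst : G.adjMatrix ℕ *ᵥ Function.const V 1 = Function.const V d := by
      ext u; simp [hd u]
    rw [sq, ← mulVec_mulVec, hconst, adjMatrix_mulVec_const_apply_of_regular hd, Nat.cast_id]
  have : 0 < Fintype.card V := Fintype.card_pos
  omega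

theorem adjMatrix_pow_add_two_of_regular {R : Type*} [Semiring R] {d : ℕ}
    (hd : G.IsRegularOfDegree d) (hdR : (d : R) = 1) (k : ℕ) :
    G.adjMatrix R ^ (k + 2) = of fun _ _ => 1 := by
  induction k with
  | zero => simp [hG.adjMatrix_sq_of_regular hd, hdR]
  | succ k ih =>
    rw [pow_succ', ih]
    ext v w
    simp [hd v, hdR]

/-- For a prime `p ∣ d - 1`, the matrix `A ^ p` is the all-ones matrix mod `p`, whose trace is
`card V ≡ 1`, while `tr (A ^ p) = (tr A) ^ p = 0` by Frobenius. -/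
theorem lt_three_of_isRegularOfDegree [Nonempty V] {d : ℕ} (hd : G.IsRegularOfDegree d) :
    d < 3 := by
  by_contra! h3
  set p := (d - 1).minFac
  have hp : Fact p.Prime := ⟨Nat.minFac_prime (by omega)⟩
  have hdp : (d : ZMod p) = 1 := by
    have : ((d - 1 : ℕ) : ZMod p) = 0 := (ZMod.natCast_eq_zero_iff _ _).2 (d - 1).minFac_dvd
    rw [← Nat.sub_add_cancel (by omega : 1 ≤ d), Nat.cast_add, this, zero_add, Nat.cast_one]
  have hcard : (Fintype.card V : ZMod p) = 1 := by
    simpa [hdp] using congrArg (Nat.cast : ℕ → ZMod p) (hG.card_add_degree_of_regular hd)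
  have htrace := ZMod.trace_pow_card (G.adjMatrix (ZMod p))
  obtain ⟨k, hk⟩ := Nat.exists_eq_add_of_le' hp.out.two_le
  have hJ := hG.adjMatrix_pow_add_two_of_regular hd hdp k
  rw [← hk] at hJ
  rw [trace_adjMatrix, zero_pow hp.out.ne_zero, hJ] at htrace
  simp [trace, hcard] at htrace

theorem exists_forall_adj_of_four_le_card (hV : 4 ≤ Fintype.card V) :
    ∃ v, ∀ w, v ≠ w → G.Adj v w := by
  by_contra! hP
  have : Nonempty V := Fintype.card_pos_iff.1 (by omega)
  obtain ⟨v⟩ := (inferInstance : Nonempty V)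
  have hd : G.IsRegularOfDegree (G.degree v) := fun w =>
    hG.degree_eq_degree_of_forall_exists_not_adj hP w v
  have h3 := hG.lt_three_of_isRegularOfDegree hd
  have hcard := hG.card_add_degree_of_regular hd
  interval_cases G.degree v <;> omega

end IsFriendship
end SimpleGraph

theorem ne_of_not_le_sup {L : Type*} [Lattice L] {a b c p : L} (hpabc : p ≤ a ⊔ b ⊔ c)
    (hpab : ¬p ≤ a ⊔ b) (hpac : ¬p ≤ a ⊔ c) (hpbc : ¬p ≤ b ⊔ c) :
    a ≠ b ∧ a ≠ c ∧ b ≠ c ∧ p ≠ a ∧ p ≠ b ∧ p ≠ c := by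
  refine ⟨?_, ?_, ?_, ?_, ?_, ?_⟩ <;> rintro rfl
  · exact hpac (hpabc.trans (sup_le (sup_le le_sup_left le_sup_left) le_sup_right))
  · exact hpab (hpabc.trans (sup_le le_rfl le_sup_left))
  · exact hpab (hpabc.trans (sup_le le_rfl le_sup_right))
  · exact hpab le_sup_left
  · exact hpab le_sup_right
  · exact hpac le_sup_right

section ModularLattice

variable {L : Type*} [Lattice L] [IsModularLattice L]

section OrderBot

variable [OrderBot L]

theorem IsAtom.covBy_sup_of_not_le {a w : L} (ha : IsAtom a) (haw : ¬a ≤ w) : w ⋖ w ⊔ a :=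
  covBy_sup_of_inf_covBy_right ((ha.not_le_iff_disjoint.1 haw).symm.eq_bot ▸ ha.bot_covBy)

theorem IsAtom.sup_eq_sup_of_le_sup {a q w : L} (ha : IsAtom a) (hq : q ≤ w ⊔ a)
    (hqw : ¬q ≤ w) : w ⊔ q = w ⊔ a := by
  have hcov := ha.covBy_sup_of_not_le fun haw => hqw (hq.trans (sup_le le_rfl haw))
  refine (hcov.eq_or_eq le_sup_left (sup_le le_sup_left hq)).resolve_left fun h => hqw ?_
  exact h ▸ le_sup_right

theorem IsAtom.covBy_sup_of_le_sup {a b r : L} (hr : IsAtom r) (ha : IsAtom a) (hb : IsAtom b)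
    (hab : a ≠ b) (hrab : r ≤ a ⊔ b) : r ⋖ a ⊔ b := by
  have hba : ¬b ≤ a := fun h => hab ((ha.le_iff.1 h).resolve_left hb.1).symm
  by_cases hra : r ≤ a
  · rw [(ha.le_iff.1 hra).resolve_left hr.1]
    exact hb.covBy_sup_of_not_le hba
  · rw [← hb.sup_eq_sup_of_le_sup hrab hra, sup_comm]
    exact ha.covBy_sup_of_not_le fun h => hra (((hr.le_iff.1 h).resolve_left ha.1) ▸ le_rfl)

theorem IsAtom.lt_sup_of_ne {p q : L} (hp : IsAtom p) (hq : IsAtom q) (hpq : p ≠ q) : p < p ⊔ q :=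
  (hq.covBy_sup_of_not_le fun h => hpq ((hp.le_iff.1 h).resolve_left hq.1).symm).lt

theorem sup_covBy_of_sup_covBy [IsAtomic L] {a b p q v : L} (ha : IsAtom a) (hb : IsAtom b)
    (hab : a ≠ b) (hp : IsAtom p) (hq : IsAtom q) (hpq : p ≠ q) (habv : a ⊔ b ⋖ v)
    (hpqv : p ⊔ q ≤ v) : p ⊔ q ⋖ v := by
  set m := a ⊔ b
  set l := p ⊔ q
  have hpl : p < l := hp.lt_sup_of_ne hq hpq
  by_cases hlm : l ≤ m
  · have hpm := hp.covBy_sup_of_le_sup ha hb hab (hpl.le.trans hlm)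
    rwa [(hpm.eq_or_eq hpl.le hlm).resolve_left hpl.ne']
  -- Otherwise the lines `l` and `m` meet in a point `r`, and `r ⋖ m` lifts to `l ⋖ m ⊔ l = v`.
  have hmlv : m ⊔ l = v := (habv.eq_or_eq le_sup_left (sup_le habv.le hpqv)).resolve_left
    fun h => hlm (h ▸ le_sup_right)
  have hml : m ⊓ l ⋖ l := inf_covBy_of_covBy_sup_left (hmlv ▸ habv)
  obtain ⟨r, hr, hrml⟩ := (eq_bot_or_exists_atom_le (m ⊓ l)).resolve_left fun h =>
    (h ▸ hml).2 hp.bot_lt hpl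
  have hrl := hr.covBy_sup_of_le_sup hp hq hpq (hrml.trans inf_le_right)
  have hr_eq : r = m ⊓ l := ((hrl.eq_or_eq hrml hml.le).resolve_right hml.lt.ne).symm
  rw [← hmlv]
  exact covBy_sup_of_inf_covBy_left
    (hr_eq ▸ hr.covBy_sup_of_le_sup ha hb hab (hrml.trans inf_le_left))

theorem sup_sup_eq_of_sup_covBy [IsAtomic L] {a b x y w v : L} (ha : IsAtom a) (hb : IsAtom b)
    (hab : a ≠ b) (habv : a ⊔ b ⋖ v) (hx : IsAtom x) (hy : IsAtom y) (hxy : x ≠ y) (hxv : x ≤ v)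
    (hyv : y ≤ v) (hwv : w ≤ v) (hw : ¬w ≤ x ⊔ y) : x ⊔ y ⊔ w = v :=
  ((sup_covBy_of_sup_covBy ha hb hab hx hy hxy habv (sup_le hxv hyv)).eq_or_eq le_sup_left
    (sup_le (sup_le hxv hyv) hwv)).resolve_left fun h => hw (h ▸ le_sup_right)

theorem sup_sup_le_of_forall_ne_le [IsAtomic L] {a b c p z u : L} (ha : IsAtom a)
    (hb : IsAtom b) (hc : IsAtom c) (hp : IsAtom p) (hpabc : p ≤ a ⊔ b ⊔ c) (hpab : ¬p ≤ a ⊔ b)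
    (hpac : ¬p ≤ a ⊔ c) (hpbc : ¬p ≤ b ⊔ c)
    (hu : ∀ w, IsAtom w → w ≤ a ⊔ b ⊔ c → w ≠ z → w ≤ u) : a ⊔ b ⊔ c ≤ u := by
  obtain ⟨hab, hac, hbc, hpa, hpb, hpc⟩ := ne_of_not_le_sup hpabc hpab hpac hpbc
  have hav : a ≤ a ⊔ b ⊔ c := le_sup_left.trans le_sup_left
  have hbv : b ≤ a ⊔ b ⊔ c := le_sup_right.trans le_sup_left
  have hcv : c ≤ a ⊔ b ⊔ c := le_sup_right
  have hplane : a ⊔ b ⋖ a ⊔ b ⊔ c :=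
    hc.covBy_sup_of_not_le fun h => hpab (hpabc.trans (sup_le le_rfl h))
  by_cases hza : a = z
  · rw [← sup_sup_eq_of_sup_covBy ha hb hab hplane hb hc hbc hbv hcv hpabc hpbc]
    exact sup_le (sup_le (hu b hb hbv (hza ▸ hab.symm)) (hu c hc hcv (hza ▸ hac.symm)))
      (hu p hp hpabc (hza ▸ hpa))
  by_cases hzb : b = z
  · rw [← sup_sup_eq_of_sup_covBy ha hb hab hplane ha hc hac hav hcv hpabc hpac]
    exact sup_le (sup_le (hu a ha hav hza) (hu c hc hcv (hzb ▸ hbc.symm)))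
      (hu p hp hpabc (hzb ▸ hpb))
  by_cases hzc : c = z
  · rw [← sup_sup_eq_of_sup_covBy ha hb hab hplane ha hb hab hav hbv hpabc hpab]
    exact sup_le (sup_le (hu a ha hav hza) (hu b hb hbv hzb)) (hu p hp hpabc (hzc ▸ hpc))
  exact sup_le (sup_le (hu a ha hav hza) (hu b hb hbv hzb)) (hu c hc hcv hzc)

end OrderBot

end ModularLattice

section ComplementedLattice

variable {L : Type*} [Lattice L] [BoundedOrder L] [IsModularLattice L] [ComplementedLattice L]

theorem exists_isAtom_le_of_le_sup {p w a : L} (hp : IsAtom p) (hpwa : p ≤ w ⊔ a)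
    (hpw : ¬p ≤ w) : ∃ m, IsAtom m ∧ m ≤ a ∧ p ≤ w ⊔ m := by
  set a' := a ⊓ (w ⊔ p)
  have hwa' : w ⊔ a' = w ⊔ p := by
    rw [← sup_inf_assoc_of_le a le_sup_left, inf_eq_right.2 (sup_le le_sup_left hpwa)]
  have hcov : w ⊓ a' ⋖ a' :=
    inf_covBy_of_covBy_sup_left (hwa' ▸ hp.covBy_sup_of_not_le hpw)
  obtain ⟨m, hdisj, hsup⟩ :=
    IsModularLattice.exists_disjoint_and_sup_eq (inf_le_right : w ⊓ a' ≤ a')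
  have hm : IsAtom m := by
    have hcov' : w ⊓ a' ⋖ w ⊓ a' ⊔ m := by rwa [hsup]
    rw [← bot_covBy_iff, ← hdisj.eq_bot]
    exact inf_covBy_of_covBy_sup_left hcov'
  refine ⟨m, hm, (hsup ▸ le_sup_right : m ≤ a').trans inf_le_left, ?_⟩
  calc p ≤ w ⊔ a' := hwa' ▸ le_sup_right
    _ ≤ w ⊔ m := sup_le le_sup_left (hsup ▸ sup_le (inf_le_left.trans le_sup_left) le_sup_right)

theorem le_of_forall_isAtom_le [IsAtomic L] {a b : L} (h : ∀ q, IsAtom q → q ≤ a → q ≤ b) :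
    a ≤ b := by
  obtain ⟨t, hdisj, hsup⟩ := IsModularLattice.exists_disjoint_and_sup_eq (inf_le_left : a ⊓ b ≤ a)
  obtain rfl | ⟨q, hq, hqt⟩ := eq_bot_or_exists_atom_le t
  · rw [← hsup, sup_bot_eq]
    exact inf_le_right
  · have hqa : q ≤ a := hsup ▸ hqt.trans le_sup_right
    exact absurd (le_bot_iff.1 (hdisj (le_inf hqa (h q hq hqa)) hqt)) hq.1

end ComplementedLattice

structure IsOrthocomplementation {L : Type*} [Lattice L] [BoundedOrder L] (compl : L → L) :
    Prop where
  le_iff_le : ∀ a b : L, a ≤ b ↔ compl b ≤ compl a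
  compl_compl : ∀ a : L, compl (compl a) = a
  inf_compl : ∀ a : L, a ⊓ compl a = ⊥
  sup_compl : ∀ a : L, a ⊔ compl a = ⊤

namespace IsOrthocomplementation

variable {L : Type*} [Lattice L] [BoundedOrder L] {compl : L → L}
  (hc : IsOrthocomplementation compl)
include hc

theorem le_compl_comm {a b : L} (h : a ≤ compl b) : b ≤ compl a := by
  simpa only [hc.compl_compl] using (hc.le_iff_le a (compl b)).1 h

theorem eq_bot_of_le_compl {a : L} (h : a ≤ compl a) : a = ⊥ := by
  rw [← hc.inf_compl a, inf_eq_left.2 h]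

theorem complementedLattice : ComplementedLattice L :=
  ⟨fun a => ⟨compl a, disjoint_iff.2 (hc.inf_compl a), codisjoint_iff.2 (hc.sup_compl a)⟩⟩

def orthogonalityGraph (v : L) : SimpleGraph {a : L // IsAtom a ∧ a ≤ v} where
  Adj a b := (a : L) ≤ compl b
  symm := ⟨fun _ _ => hc.le_compl_comm⟩
  loopless := ⟨fun a h => a.2.1.1 (hc.eq_bot_of_le_compl h)⟩

variable [IsModularLattice L]

theorem sup_compl_inf_eq {u v : L} (huv : u ≤ v) : u ⊔ compl u ⊓ v = v := by
  rw [← sup_inf_assoc_of_le _ huv, hc.sup_compl, top_inf_eq]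

theorem isFriendship_orthogonalityGraph [IsAtomic L] {a b v : L}
    (ha : IsAtom a) (hb : IsAtom b) (hab : a ≠ b) (habv : a ⊔ b ⋖ v) :
    (hc.orthogonalityGraph v).IsFriendship := by
  rintro ⟨A, hA, hAv⟩ ⟨B, hB, hBv⟩ hAB
  have hABv : A ⊔ B ≤ v := sup_le hAv hBv
  set C := compl (A ⊔ B) ⊓ v
  have hcov : A ⊔ B ⋖ A ⊔ B ⊔ C := by
    rw [hc.sup_compl_inf_eq hABv]
    exact sup_covBy_of_sup_covBy ha hb hab hA hB (fun h => hAB (Subtype.ext h)) habv hABv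
  have hC : IsAtom C := by
    have hinf : (A ⊔ B) ⊓ C = ⊥ :=
      le_bot_iff.1 (hc.inf_compl (A ⊔ B) ▸ inf_le_inf_left _ inf_le_left)
    rw [← bot_covBy_iff, ← hinf]
    exact inf_covBy_of_covBy_sup_left hcov
  have hCA : C ≤ compl A := inf_le_left.trans ((hc.le_iff_le _ _).1 le_sup_left)
  have hCB : C ≤ compl B := inf_le_left.trans ((hc.le_iff_le _ _).1 le_sup_right)
  refine ⟨⟨C, hC, inf_le_right⟩, ⟨hc.le_compl_comm hCA, hc.le_compl_comm hCB⟩, ?_⟩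
  rintro ⟨R, hR, hRv⟩ ⟨hAR, hBR⟩
  have hRC : R ≤ C := le_inf (hc.le_compl_comm (sup_le hAR hBR)) hRv
  exact Subtype.ext ((hC.le_iff.1 hRC).resolve_left hR.1)

variable [Finite L]

theorem le_sup_or_le_sup_or_le_sup_of_isAtom {a b c p : L} (ha : IsAtom a) (hb : IsAtom b)
    (hc' : IsAtom c) (hp : IsAtom p) (hpabc : p ≤ a ⊔ b ⊔ c) :
    p ≤ a ⊔ b ∨ p ≤ a ⊔ c ∨ p ≤ b ⊔ c := by
  classical
  by_contra! ⟨hpab, hpac, hpbc⟩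
  obtain ⟨hab, hac, hbc, hpa, hpb, hpc⟩ := ne_of_not_le_sup hpabc hpab hpac hpbc
  set v := a ⊔ b ⊔ c
  have hplane : a ⊔ b ⋖ v := hc'.covBy_sup_of_not_le fun h => hpab (hpabc.trans (sup_le le_rfl h))
  let V := {x : L // IsAtom x ∧ x ≤ v}
  have : Fintype V := Fintype.ofFinite V
  have hcard : 4 ≤ Fintype.card V := by
    have h4 := Finset.card_eq_four.2 ⟨(⟨a, ha, le_sup_left.trans le_sup_left⟩ : V),
      ⟨b, hb, le_sup_right.trans le_sup_left⟩, ⟨c, hc', le_sup_right⟩, ⟨p, hp, hpabc⟩,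
      by simpa using hab, by simpa using hac, by simpa using hpa.symm,
      by simpa using hbc, by simpa using hpb.symm, by simpa using hpc.symm, rfl⟩
    exact h4 ▸ Finset.card_le_univ _
  obtain ⟨⟨z, hz, hzv⟩, hzadj⟩ :=
    (hc.isFriendship_orthogonalityGraph ha hb hab hplane).exists_forall_adj_of_four_le_card hcard
  have hvz : v ≤ compl z := sup_sup_le_of_forall_ne_le ha hb hc' hp hpabc hpab hpac hpbc
    fun w hw hwv hwz =>
      hc.le_compl_comm (hzadj ⟨w, hw, hwv⟩ fun h => hwz (congrArg Subtype.val h).symm)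
  exact hz.1 (hc.eq_bot_of_le_compl (hzv.trans hvz))

theorem le_sup_or_le_sup_or_le_sup {a b c p : L} (hp : IsAtom p) (hpabc : p ≤ a ⊔ b ⊔ c) :
    p ≤ a ⊔ b ∨ p ≤ a ⊔ c ∨ p ≤ b ⊔ c := by
  have := hc.complementedLattice
  by_contra! ⟨hpab, hpac, hpbc⟩
  obtain ⟨a', ha', ha'a, hpa'⟩ :=
    exists_isAtom_le_of_le_sup (a := a) hp (hpabc.trans_eq (by ac_rfl)) hpbc
  obtain ⟨b', hb', hb'b, hpb'⟩ := exists_isAtom_le_of_le_sup (w := a' ⊔ c) (a := b) hp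
    (hpa'.trans_eq (by ac_rfl)) fun h => hpac (h.trans (sup_le_sup_right ha'a c))
  obtain ⟨c', hc'', hc'c, hpc'⟩ := exists_isAtom_le_of_le_sup (w := a' ⊔ b') (a := c) hp
    (hpb'.trans_eq (by ac_rfl)) fun h => hpab (h.trans (sup_le_sup ha'a hb'b))
  rcases hc.le_sup_or_le_sup_or_le_sup_of_isAtom ha' hb' hc'' hp hpc' with h | h | h
  · exact hpab (h.trans (sup_le_sup ha'a hb'b))
  · exact hpac (h.trans (sup_le_sup ha'a hc'c))
  · exact hpbc (h.trans (sup_le_sup hb'b hc'c))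

end IsOrthocomplementation

theorem stmt_15 {L : Type*} [Lattice L] [BoundedOrder L] [IsModularLattice L] [Finite L]
    (compl : L → L)
    (h_le : ∀ a b : L, a ≤ b ↔ compl b ≤ compl a)
    (h_inv : ∀ a : L, compl (compl a) = a)
    (h_inf : ∀ a : L, a ⊓ compl a = ⊥)
    (h_sup : ∀ a : L, a ⊔ compl a = ⊤)
    (x x0 x1 x2 : L) :
    x ⊓ (x0 ⊔ x1 ⊔ x2) = (x ⊓ (x0 ⊔ x1)) ⊔ (x ⊓ (x0 ⊔ x2)) ⊔ (x ⊓ (x1 ⊔ x2)) := by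
  have hc : IsOrthocomplementation compl := ⟨h_le, h_inv, h_inf, h_sup⟩
  have := hc.complementedLattice
  refine le_antisymm (le_of_forall_isAtom_le fun q hq hqle => ?_) (sup_le (sup_le ?_ ?_) ?_)
  · have hqx : q ≤ x := hqle.trans inf_le_left
    rcases hc.le_sup_or_le_sup_or_le_sup hq (hqle.trans inf_le_right) with h | h | h
    · exact le_sup_of_le_left (le_sup_of_le_left (le_inf hqx h))
    · exact le_sup_of_le_left (le_sup_of_le_right (le_inf hqx h))
    · exact le_sup_of_le_right (le_inf hqx h)
  · exact inf_le_inf_left x le_sup_left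
  · exact inf_le_inf_left x (sup_le_sup_right le_sup_left x2)
  · exact inf_le_inf_left x (sup_le_sup_right le_sup_right x2)
end

section
/- Let L be a bounded complemented modular lattice that is atomic and in which every element is a join of atoms. Let s(x̄) and t(x̄) be lattice terms in variables x₁,…,xₙ (built from variables by binary meet and join) such that s(b̄) ≤ t(b̄) for every assignment b̄ in L. If s(b̄) < t(b̄) for some assignment b̄ in L, then there is an assignment c̄ in L with c_i ≤ b_i for all i and s(c̄) < t(c̄), such that, setting u := c₁ ⊔ … ⊔ cₙ, the interval [⊥, u] has height at most the number of occurrences of variables in t(x̄) (every chain in [⊥, u] has length at most that number). Auxiliary claim proved by structural induction: for every atom p of L, every lattice term t(x̄), and every assignment b̄ with p ≤ t(b̄), there is an assignment c̄ with c_i ≤ b_i, p ≤ t(c̄), and the height of [⊥, c₁ ⊔ … ⊔ cₙ] at most the number of occurrences of variables in t(x̄). -/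
/-- Lattice terms in `n` variables, built from variables by binary meet and join. -/
inductive LatTerm (n : ℕ) : Type
  | var : Fin n → LatTerm n
  | meet : LatTerm n → LatTerm n → LatTerm n
  | join : LatTerm n → LatTerm n → LatTerm n

/-- Evaluation of a lattice term under an assignment `b` of the variables. -/
def LatTerm.eval {L : Type*} [Lattice L] {n : ℕ} (b : Fin n → L) : LatTerm n → L
  | .var i => b i
  | .meet t1 t2 => t1.eval b ⊓ t2.eval b
  | .join t1 t2 => t1.eval b ⊔ t2.eval b

/-- Number of occurrences of variables in a lattice term. -/
def LatTerm.occ {n : ℕ} : LatTerm n → ℕ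
  | .var _ => 1
  | .meet t1 t2 => t1.occ + t2.occ
  | .join t1 t2 => t1.occ + t2.occ

/-- The interval `[⊥, u]` has height at most `N`: every chain
`⊥ = y₀ < y₁ < … < y_k ≤ u` has length `k ≤ N`. -/
def HeightLE {L : Type*} [Lattice L] [BoundedOrder L] (u : L) (N : ℕ) : Prop :=
  ∀ (k : ℕ) (y : Fin (k + 1) → L), y 0 = ⊥ → StrictMono y → (∀ i, y i ≤ u) → k ≤ N

/-!
An atom `p ≤ t(b)` already lies below `t(c)` for `c i = b i ⊓ S`, where `S` is a join of at
most `occ t` atoms: a variable takes `S = p`, a meet joins the atom sets of its two sides, and at a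
join `p ≤ t₁(b) ⊔ t₂(b)` with `p` below neither side, the exchange property of modular atomistic
lattices yields atoms `q ≤ t₁(b)` and `r ≤ t₂(b)` with `p ≤ q ⊔ r`. In a modular lattice,
adjoining an atom `a` to `u` raises the height by at most one, since `x ↦ (x ⊓ u, x ⊔ u)` is
strictly monotone and `[u, u ⊔ a]` has at most two elements; hence `[⊥, S]` has height at most
`occ t`. For the main claim apply this to an atom below `t(b)` but not below `s(b)`.
-/
open Order

section ModularAtoms

variable {L : Type*} [Lattice L] [OrderBot L] [IsModularLattice L]

theorem IsAtom.eq_sup_of_le_sup {u a z : L} (ha : IsAtom a) (huz : u ≤ z) (hz : z ≤ u ⊔ a)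
    (hzu : ¬ z ≤ u) : z = u ⊔ a := by
  have hau : ¬ a ≤ u := fun h => hzu (hz.trans (sup_le le_rfl h))
  have hcov : u ⋖ u ⊔ a :=
    covBy_sup_of_inf_covBy_right (by
      rw [inf_comm, disjoint_iff.mp ((ha.not_le_iff_disjoint).mp hau)]
      exact ha.bot_covBy)
  exact (hcov.eq_or_eq huz hz).resolve_left fun h => hzu h.le

theorem height_le_add_one_of_le_sup_atom {u a x : L} (ha : IsAtom a) (hx : x ≤ u ⊔ a) (n : ℕ)
    (h : height (x ⊓ u) ≤ n) : height x ≤ n + 1 := by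
  induction n using Nat.strong_induction_on generalizing x with
  | _ n ih =>
  rw [← Nat.cast_succ, height_le_coe_iff]
  intro y hyx
  by_cases hyu : y ≤ u
  · calc height y ≤ height (x ⊓ u) := height_mono (le_inf hyx.le hyu)
      _ ≤ n := h
      _ < (n + 1 : ℕ) := by exact_mod_cast n.lt_succ_self
  · have hxu : ¬ x ≤ u := fun h => hyu (hyx.le.trans h)
    have hy : y ≤ u ⊔ a := hyx.le.trans hx
    -- `u ⋖ u ⊔ a`, so `y` and `x` have the same join with `u`; modularity makes the meets differ.
    have hsup : x ⊔ u ≤ y ⊔ u := by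
      rw [ha.eq_sup_of_le_sup le_sup_right (sup_le hx le_sup_left) (hxu <| le_sup_left.trans ·),
        ha.eq_sup_of_le_sup le_sup_right (sup_le hy le_sup_left) (hyu <| le_sup_left.trans ·)]
    have hlt : height (y ⊓ u) + 1 ≤ n :=
      (height_add_one_le (inf_lt_inf_of_lt_of_sup_le_sup hyx hsup)).trans h
    obtain ⟨m, hm⟩ : ∃ m : ℕ, (m : ℕ∞) = height (y ⊓ u) :=
      ENat.ne_top_iff_exists.mp fun htop => by simp [htop] at hlt
    rw [← hm] at hlt
    have hmn : m + 1 ≤ n := by exact_mod_cast hlt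
    calc height y ≤ m + 1 := ih m (by omega) hy hm.ge
      _ < (n + 1 : ℕ) := by exact_mod_cast Nat.lt_succ_of_le hmn

theorem height_sup_atom_le {a : L} (ha : IsAtom a) (u : L) : height (u ⊔ a) ≤ height u + 1 := by
  rcases eq_or_ne (height u) ⊤ with htop | hfin
  · simp [htop]
  lift height u to ℕ using hfin with n hn
  exact height_le_add_one_of_le_sup_atom ha le_rfl n (by rw [inf_eq_right.mpr le_sup_left, hn])

theorem height_finset_sup_le_card (A : Finset L) (hA : ∀ q ∈ A, IsAtom q) :
    height (A.sup id) ≤ A.card := by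
  classical
  induction A using Finset.induction_on with
  | empty => simp
  | insert a A haA ih =>
    rw [Finset.sup_insert, id, sup_comm, Finset.card_insert_of_notMem haA]
    push_cast
    calc height (A.sup id ⊔ a) ≤ height (A.sup id) + 1 :=
          height_sup_atom_le (hA a (Finset.mem_insert_self a A)) _
      _ ≤ A.card + 1 := by gcongr; exact ih fun q hq => hA q (Finset.mem_insert_of_mem hq)

variable [IsAtomistic L]

theorem IsAtom.exists_atom_le_left_of_le_sup {p a b : L} (hp : IsAtom p) (h : p ≤ a ⊔ b)
    (hpb : ¬ p ≤ b) : ∃ q, IsAtom q ∧ q ≤ a ∧ p ≤ q ⊔ b := by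
  have hr : (p ⊔ b) ⊓ a ⊔ b = (p ⊔ b) ⊓ (a ⊔ b) := inf_sup_assoc_of_le a le_sup_right
  have hrb : ¬ (p ⊔ b) ⊓ a ≤ b := fun hle =>
    hpb (le_inf le_sup_left h |>.trans (hr ▸ sup_le hle le_rfl))
  obtain ⟨q, hq, hqr, hqb⟩ : ∃ q, IsAtom q ∧ q ≤ (p ⊔ b) ⊓ a ∧ ¬ q ≤ b := by
    simpa [and_assoc] using le_iff_atom_le_imp.not.mp hrb
  have hqpb : b ⊔ q = b ⊔ p := by
    refine hp.eq_sup_of_le_sup le_sup_left (sup_le le_sup_left ?_) (hqb <| le_sup_right.trans ·)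
    exact (hqr.trans inf_le_left).trans (sup_comm p b).le
  exact ⟨q, hq, hqr.trans inf_le_right, by rw [sup_comm, hqpb]; exact le_sup_right⟩

theorem IsAtom.exists_atoms_le_of_le_sup {p a b : L} (hp : IsAtom p) (h : p ≤ a ⊔ b)
    (hpa : ¬ p ≤ a) (hpb : ¬ p ≤ b) : ∃ q r, IsAtom q ∧ IsAtom r ∧ q ≤ a ∧ r ≤ b ∧ p ≤ q ⊔ r := by
  obtain ⟨q, hq, hqa, hpq⟩ := hp.exists_atom_le_left_of_le_sup h hpb
  have hpq' : ¬ p ≤ q := fun hle => hpa ((hq.le_iff.mp hle).resolve_left hp.ne_bot ▸ hqa)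
  obtain ⟨r, hr, hrb, hpr⟩ := hp.exists_atom_le_left_of_le_sup (sup_comm q b ▸ hpq) hpq'
  exact ⟨q, r, hq, hr, hqa, hrb, sup_comm r q ▸ hpr⟩

end ModularAtoms

theorem heightLE_of_height_le {L : Type*} [Lattice L] [BoundedOrder L] {u : L} {N : ℕ}
    (h : height u ≤ N) : HeightLE u N := fun k y _ hy hyu => by
  exact_mod_cast (length_le_height (p := LTSeries.mk k y hy) (hyu (Fin.last k))).trans h

namespace LatTerm

variable {L : Type*} [Lattice L] {n : ℕ}

theorem eval_mono (t : LatTerm n) : Monotone fun b : Fin n → L => t.eval b := by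
  induction t with
  | var i => exact fun _ _ h => h i
  | meet t1 t2 ih1 ih2 => exact fun _ _ h => inf_le_inf (ih1 h) (ih2 h)
  | join t1 t2 ih1 ih2 => exact fun _ _ h => sup_le_sup (ih1 h) (ih2 h)

theorem eval_inf_mono (t : LatTerm n) (b : Fin n → L) {S T : L} (h : S ≤ T) :
    t.eval (fun i => b i ⊓ S) ≤ t.eval (fun i => b i ⊓ T) :=
  t.eval_mono fun _ => inf_le_inf_left _ h

section

variable [OrderBot L] [IsModularLattice L] [IsAtomistic L]

theorem exists_atoms_le_eval_inf_sup (t : LatTerm n) {p : L} (hp : IsAtom p) {b : Fin n → L}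
    (hpb : p ≤ t.eval b) : ∃ A : Finset L, (∀ q ∈ A, IsAtom q) ∧ A.card ≤ t.occ ∧
      p ≤ t.eval (fun i => b i ⊓ A.sup id) := by
  classical
  induction t generalizing p with
  | var _ => exact ⟨{p}, by simpa using hp, le_rfl, by simpa [eval] using hpb⟩
  | meet t1 t2 ih1 ih2 =>
    obtain ⟨A1, hA1, hc1, hp1⟩ := ih1 hp (hpb.trans inf_le_left)
    obtain ⟨A2, hA2, hc2, hp2⟩ := ih2 hp (hpb.trans inf_le_right)
    refine ⟨A1 ∪ A2, ?_, ?_, le_inf ?_ ?_⟩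
    · exact Finset.forall_mem_union.mpr ⟨hA1, hA2⟩
    · exact (Finset.card_union_le A1 A2).trans (Nat.add_le_add hc1 hc2)
    · exact hp1.trans (t1.eval_inf_mono b (Finset.sup_mono Finset.subset_union_left))
    · exact hp2.trans (t2.eval_inf_mono b (Finset.sup_mono Finset.subset_union_right))
  | join t1 t2 ih1 ih2 =>
    by_cases hp1 : p ≤ t1.eval b
    · obtain ⟨A, hA, hc, hpA⟩ := ih1 hp hp1
      exact ⟨A, hA, hc.trans (Nat.le_add_right _ _), hpA.trans le_sup_left⟩
    by_cases hp2 : p ≤ t2.eval b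
    · obtain ⟨A, hA, hc, hpA⟩ := ih2 hp hp2
      exact ⟨A, hA, hc.trans (Nat.le_add_left _ _), hpA.trans le_sup_right⟩
    obtain ⟨q, r, hq, hr, hq1, hr2, hpqr⟩ := hp.exists_atoms_le_of_le_sup hpb hp1 hp2
    obtain ⟨A1, hA1, hc1, hqA⟩ := ih1 hq hq1
    obtain ⟨A2, hA2, hc2, hrA⟩ := ih2 hr hr2
    refine ⟨A1 ∪ A2, ?_, ?_, hpqr.trans (sup_le_sup ?_ ?_)⟩
    · exact Finset.forall_mem_union.mpr ⟨hA1, hA2⟩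
    · exact (Finset.card_union_le A1 A2).trans (Nat.add_le_add hc1 hc2)
    · exact hqA.trans (t1.eval_inf_mono b (Finset.sup_mono Finset.subset_union_left))
    · exact hrA.trans (t2.eval_inf_mono b (Finset.sup_mono Finset.subset_union_right))

end

variable [BoundedOrder L] [IsModularLattice L] [IsAtomistic L]

theorem exists_le_heightLE_of_atom_le_eval (t : LatTerm n) {p : L} (hp : IsAtom p)
    {b : Fin n → L} (hpb : p ≤ t.eval b) : ∃ c : Fin n → L, (∀ i, c i ≤ b i) ∧ p ≤ t.eval c ∧
      HeightLE (Finset.univ.sup c) t.occ := by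
  obtain ⟨A, hA, hcard, hpA⟩ := t.exists_atoms_le_eval_inf_sup hp hpb
  refine ⟨_, fun i => inf_le_left, hpA, heightLE_of_height_le ?_⟩
  calc height (Finset.univ.sup fun i => b i ⊓ A.sup id) ≤ height (A.sup id) :=
        height_mono (Finset.sup_le fun i _ => inf_le_right)
    _ ≤ A.card := height_finset_sup_le_card A hA
    _ ≤ t.occ := by exact_mod_cast hcard

theorem exists_le_lt_heightLE_of_lt {s t : LatTerm n} (hst : ∀ b : Fin n → L, s.eval b ≤ t.eval b)
    {b : Fin n → L} (hlt : s.eval b < t.eval b) : ∃ c : Fin n → L, (∀ i, c i ≤ b i) ∧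
      s.eval c < t.eval c ∧ HeightLE (Finset.univ.sup c) t.occ := by
  obtain ⟨p, hp, hpt, hps⟩ : ∃ p, IsAtom p ∧ p ≤ t.eval b ∧ ¬ p ≤ s.eval b := by
    simpa using le_iff_atom_le_imp.not.mp hlt.not_ge
  obtain ⟨c, hcb, hpc, hheight⟩ := t.exists_le_heightLE_of_atom_le_eval hp hpt
  refine ⟨c, hcb, (hst c).lt_of_ne fun heq => hps ?_, hheight⟩
  exact (hpc.trans heq.ge).trans (s.eval_mono hcb)

end LatTerm

theorem stmt_17_general {L : Type*} [Lattice L] [BoundedOrder L] [IsModularLattice L]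
    (hatomistic : ∀ a : L, IsLUB {p : L | IsAtom p ∧ p ≤ a} a)
    (n : ℕ) :
    -- main claim
    (∀ s t : LatTerm n, (∀ b : Fin n → L, s.eval b ≤ t.eval b) →
      ∀ b : Fin n → L, s.eval b < t.eval b →
        ∃ c : Fin n → L, (∀ i, c i ≤ b i) ∧ s.eval c < t.eval c ∧
          HeightLE (Finset.univ.sup c) t.occ) ∧
    -- auxiliary claim
    (∀ p : L, IsAtom p → ∀ (t : LatTerm n) (b : Fin n → L), p ≤ t.eval b →
      ∃ c : Fin n → L, (∀ i, c i ≤ b i) ∧ p ≤ t.eval c ∧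
        HeightLE (Finset.univ.sup c) t.occ) := by
  have : IsAtomistic L := ⟨fun a => ⟨_, hatomistic a, fun _ hp => hp.1⟩⟩
  exact ⟨fun _ _ hst _ hlt => LatTerm.exists_le_lt_heightLE_of_lt hst hlt,
    fun _ hp t _ hpb => t.exists_le_heightLE_of_atom_le_eval hp hpb⟩

theorem stmt_17 {L : Type*} [Lattice L] [BoundedOrder L] [IsModularLattice L]
    [ComplementedLattice L] [IsAtomic L]
    (hatomistic : ∀ a : L, IsLUB {p : L | IsAtom p ∧ p ≤ a} a)
    (n : ℕ) :
    -- main claim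
    (∀ s t : LatTerm n, (∀ b : Fin n → L, s.eval b ≤ t.eval b) →
      ∀ b : Fin n → L, s.eval b < t.eval b →
        ∃ c : Fin n → L, (∀ i, c i ≤ b i) ∧ s.eval c < t.eval c ∧
          HeightLE (Finset.univ.sup c) t.occ) ∧
    -- auxiliary claim
    (∀ p : L, IsAtom p → ∀ (t : LatTerm n) (b : Fin n → L), p ≤ t.eval b →
      ∃ c : Fin n → L, (∀ i, c i ≤ b i) ∧ p ≤ t.eval c ∧
        HeightLE (Finset.univ.sup c) t.occ) :=
  stmt_17_general hatomistic n
end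

section
/- Let n ≥ 1 and let p be an element of the free (noncommutative) ℤ-algebra on n generators X₁,…,Xₙ. Then the following are equivalent: (a) for every m and every family f₁,…,fₙ of linear endomorphisms of the Euclidean space ℝ^m that are pairwise commuting (f_i ∘ f_j = f_j ∘ f_i) and symmetric (⟪f_i(v), w⟫ = ⟪v, f_i(w)⟫ for all v, w), the evaluation p(f₁,…,fₙ) (obtained from the unique ℤ-algebra homomorphism from the free algebra to the endomorphism algebra sending X_i ↦ f_i) is an invertible endomorphism; (b) for every ρ = (ρ₁,…,ρₙ) ∈ ℝⁿ, the evaluation p(ρ₁,…,ρₙ) (via the ℤ-algebra homomorphism to ℝ sending X_i ↦ ρ_i) is nonzero. -/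
/-!
On a joint eigenvector of `f₁, …, fₙ` with eigenvalues `χ`, the operator `p(f)` acts as the
scalar `p(χ)`. Commuting symmetric operators have a joint eigenbasis with real eigenvalues, so
if `p` has no real zero then `p(f)` maps each joint eigenspace onto itself and is surjective,
hence invertible. Conversely a real zero `ρ` of `p` gives the non-invertible `p(ρ₁ • 1, …) = 0`.
-/

namespace FreeAlgebra

open Module End

variable {R K M ι : Type*} [CommRing R] [Field K] [Algebra R K] [AddCommGroup M] [Module K M]
  [Module R M] [IsScalarTower R K M] {f : ι → End K M} {χ : ι → K}

theorem lift_apply_of_mem_iInf_eigenspace (p : FreeAlgebra R ι) {u : M}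
    (hu : u ∈ ⨅ i, eigenspace (f i) (χ i)) : lift R f p u = lift R χ p • u := by
  induction p with
  | grade0 r => simp [algebraMap_smul]
  | grade1 i => simpa using mem_eigenspace_iff.mp ((Submodule.mem_iInf _).mp hu i)
  | mul a b ha hb => simp only [map_mul, mul_apply, hb, map_smul, ha, smul_smul, mul_comm]
  | add a b ha hb => simp only [map_add, LinearMap.add_apply, ha, hb, add_smul]

theorem iInf_eigenspace_le_range_lift {p : FreeAlgebra R ι} (hp : lift R χ p ≠ 0) :
    ⨅ i, eigenspace (f i) (χ i) ≤ LinearMap.range (lift R f p) := fun u hu =>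
  ⟨(lift R χ p)⁻¹ • u, by
    rw [lift_apply_of_mem_iInf_eigenspace p (Submodule.smul_mem _ _ hu), smul_smul,
      mul_inv_cancel₀ hp, one_smul]⟩

theorem lift_smul_one (p : FreeAlgebra R ι) :
    lift R (fun i => χ i • (1 : End K M)) p = lift R χ p • 1 := by
  ext u
  exact lift_apply_of_mem_iInf_eigenspace p (Submodule.mem_iInf _ |>.mpr fun i => by simp)

end FreeAlgebra

theorem stmt_19_general (n : ℕ) (p : FreeAlgebra ℤ (Fin n)) :
    (∀ (m : ℕ) (f : Fin n → Module.End ℝ (EuclideanSpace ℝ (Fin m))),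
        (∀ i j, f i * f j = f j * f i) →
        (∀ i (v w : EuclideanSpace ℝ (Fin m)),
          (inner ℝ (f i v) w : ℝ) = inner ℝ v (f i w)) →
        IsUnit (FreeAlgebra.lift ℤ f p)) ↔
    (∀ ρ : Fin n → ℝ, FreeAlgebra.lift ℤ ρ p ≠ 0) := by
  constructor
  · intro h ρ hρ
    have hunit := h 1 (fun i => ρ i • 1) (fun i j => by simp [smul_smul, mul_comm])
      (fun i v w => by simp [real_inner_smul_left, real_inner_smul_right])
    rw [FreeAlgebra.lift_smul_one, hρ, zero_smul] at hunit
    exact not_isUnit_zero hunit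
  · intro h m f hcomm hsym
    rw [LinearMap.isUnit_iff_range_eq_top, eq_top_iff,
      ← LinearMap.IsSymmetric.iSup_iInf_eq_top_of_commute hsym fun i j _ => hcomm i j]
    exact iSup_le fun χ => FreeAlgebra.iInf_eigenspace_le_range_lift (h χ)

theorem stmt_19 (n : ℕ) (hn : 1 ≤ n) (p : FreeAlgebra ℤ (Fin n)) :
    (∀ (m : ℕ) (f : Fin n → Module.End ℝ (EuclideanSpace ℝ (Fin m))),
        (∀ i j, f i * f j = f j * f i) →
        (∀ i (v w : EuclideanSpace ℝ (Fin m)),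
          (inner ℝ (f i v) w : ℝ) = inner ℝ v (f i w)) →
        IsUnit (FreeAlgebra.lift ℤ f p)) ↔
    (∀ ρ : Fin n → ℝ, FreeAlgebra.lift ℤ ρ p ≠ 0) :=
  stmt_19_general n p
end
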